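/- arXiv:1306.4847 — 4 statements merged into one kernel-verified Lean document; each statement's English description precedes it below -/
import Mathlib

section
/- Let Σ̄ and Σ be p×p positive semidefinite matrices with entries Σ̄_{jk}, Σ_{jk}, let O ⊆ {1,...,p} with |O| = d_o ≥ 1 and ξ ≥ 1. Then the squared restricted eigenvalue satisfies RE²(ξ,O;Σ̄) ≥ RE²(ξ,O;Σ) − d_o(ξ+1)² max_{1≤j,k≤p} |Σ̄_{jk} − Σ_{jk}|. -/
open Finset Real

/-- The cone `C(ξ,O) = {b : |b_{O^c}|_1 ≤ ξ |b_O|_1}`. -/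
def cone (p : ℕ) (ξ : ℝ) (O : Finset (Fin p)) : Set (Fin p → ℝ) :=
  {b | ∑ i ∈ Oᶜ, |b i| ≤ ξ * ∑ i ∈ O, |b i|}

/-- Quadratic form `b' Σ b`. -/
def quad (p : ℕ) (S : Matrix (Fin p) (Fin p) ℝ) (b : Fin p → ℝ) : ℝ :=
  dotProduct b (S.mulVec b)

/-- Restricted eigenvalue `RE(ξ, O; Σ)`. -/
noncomputable def RE (p : ℕ) (ξ : ℝ) (O : Finset (Fin p))
    (S : Matrix (Fin p) (Fin p) ℝ) : ℝ :=
  sInf {r | ∃ b ∈ cone p ξ O, b ≠ 0 ∧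
    r = Real.sqrt (quad p S b) / (∑ i, (b i) ^ 2) ^ ((1 : ℝ) / 2)}

lemma quad_nonneg {p : ℕ} {S : Matrix (Fin p) (Fin p) ℝ} (hS : S.PosSemidef)
    (b : Fin p → ℝ) : 0 ≤ quad p S b := by
  have := hS.dotProduct_mulVec_nonneg b
  simpa [quad] using this

lemma sq_of_ratio {q n : ℝ} (hq : 0 ≤ q) (hn : 0 < n) :
    (Real.sqrt q / n ^ ((1 : ℝ) / 2)) ^ 2 = q / n := by
  rw [div_pow, Real.sq_sqrt hq]
  congr 1
  rw [← Real.rpow_natCast (n ^ ((1 : ℝ) / 2)) 2, ← Real.rpow_mul hn.le]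
  norm_num

/-- `RE²(ξ,O;Σ̄) ≥ RE²(ξ,O;Σ) - d_o (ξ+1)² max_{j,k} |Σ̄_{jk} - Σ_{jk}|`. -/
theorem stmt3 (p : ℕ) (hp : 0 < p) (A B : Matrix (Fin p) (Fin p) ℝ)
    (hA : A.PosSemidef) (hB : B.PosSemidef) (O : Finset (Fin p)) (hO : O.Nonempty)
    (ξ : ℝ) (hξ : 1 ≤ ξ) :
    RE p ξ O B ^ 2 -
        (O.card : ℝ) * (ξ + 1) ^ 2 *
          Finset.univ.sup' ⟨(⟨0, hp⟩, ⟨0, hp⟩), Finset.mem_univ _⟩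
            (fun jk : Fin p × Fin p => |A jk.1 jk.2 - B jk.1 jk.2|) ≤
      RE p ξ O A ^ 2 := by
  set M := Finset.univ.sup' ⟨(⟨0, hp⟩, ⟨0, hp⟩), Finset.mem_univ _⟩
      (fun jk : Fin p × Fin p => |A jk.1 jk.2 - B jk.1 jk.2|) with hM
  obtain ⟨i0, hi0⟩ := hO
  have hMnn : 0 ≤ M :=
    le_trans (abs_nonneg (A i0 i0 - B i0 i0))
      (Finset.le_sup' (fun jk : Fin p × Fin p => |A jk.1 jk.2 - B jk.1 jk.2|)
        (Finset.mem_univ (i0, i0)))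
  have hMle : ∀ j k, |B j k - A j k| ≤ M := by
    intro j k
    rw [abs_sub_comm]
    exact Finset.le_sup' (fun jk : Fin p × Fin p => |A jk.1 jk.2 - B jk.1 jk.2|)
      (Finset.mem_univ (j, k))
  set D := (O.card : ℝ) * (ξ + 1) ^ 2 * M with hD
  have hDnn : 0 ≤ D := mul_nonneg (mul_nonneg (by positivity) (by positivity)) hMnn
  -- the key pointwise inequality
  have key : ∀ b ∈ cone p ξ O, quad p B b ≤ quad p A b + D * ∑ i, (b i) ^ 2 := by
    intro b hb
    have expand : quad p B b - quad p A b
        = ∑ j, ∑ k, b j * ((B j k - A j k) * b k) := by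
      simp only [quad, dotProduct, Matrix.mulVec, ← Finset.sum_sub_distrib,
        ← mul_sub, ← sub_mul]
      exact Finset.sum_congr rfl fun j _ => by rw [Finset.mul_sum]
    have hbound : quad p B b - quad p A b ≤ M * (∑ i, |b i|) ^ 2 := by
      rw [expand]
      have : ∑ j, ∑ k, b j * ((B j k - A j k) * b k)
          ≤ ∑ j, ∑ k, |b j| * (M * |b k|) := by
        refine Finset.sum_le_sum fun j _ => Finset.sum_le_sum fun k _ => ?_
        calc b j * ((B j k - A j k) * b k) ≤ |b j * ((B j k - A j k) * b k)| := le_abs_self _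
          _ = |b j| * (|B j k - A j k| * |b k|) := by rw [abs_mul, abs_mul]
          _ ≤ |b j| * (M * |b k|) := by
              exact mul_le_mul_of_nonneg_left
                (mul_le_mul_of_nonneg_right (hMle j k) (abs_nonneg _)) (abs_nonneg _)
      refine this.trans_eq ?_
      rw [sq]
      rw [Finset.sum_mul_sum]
      rw [Finset.mul_sum]
      congr 1; funext j
      rw [Finset.mul_sum]
      congr 1; funext k
      ring
    have hL1 : ∑ i, |b i| ≤ (ξ + 1) * ∑ i ∈ O, |b i| := by
      have hsplit : ∑ i, |b i| = ∑ i ∈ Oᶜ, |b i| + ∑ i ∈ O, |b i| := by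
        rw [← Finset.sum_add_sum_compl O fun i => |b i|]; ring
      rw [hsplit, add_mul, one_mul]
      exact add_le_add_left (show ∑ i ∈ Oᶜ, |b i| ≤ ξ * ∑ i ∈ O, |b i| from hb) _
    have hCS : (∑ i ∈ O, |b i|) ^ 2 ≤ (O.card : ℝ) * ∑ i, (b i) ^ 2 := by
      calc (∑ i ∈ O, |b i|) ^ 2 ≤ (O.card : ℝ) * ∑ i ∈ O, |b i| ^ 2 :=
            sq_sum_le_card_mul_sum_sq
        _ ≤ (O.card : ℝ) * ∑ i, (b i) ^ 2 := by
            refine mul_le_mul_of_nonneg_left ?_ (by positivity)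
            calc ∑ i ∈ O, |b i| ^ 2 = ∑ i ∈ O, (b i) ^ 2 :=
                  Finset.sum_congr rfl fun i _ => sq_abs _
              _ ≤ ∑ i, (b i) ^ 2 := Finset.sum_le_sum_of_subset_of_nonneg
                  (Finset.subset_univ O) fun i _ _ => sq_nonneg _
    have hL2 : (∑ i, |b i|) ^ 2 ≤ (ξ + 1) ^ 2 * ((O.card : ℝ) * ∑ i, (b i) ^ 2) := by
      have h1 : (∑ i, |b i|) ^ 2 ≤ ((ξ + 1) * ∑ i ∈ O, |b i|) ^ 2 := by
        have hnn : (0:ℝ) ≤ ∑ i, |b i| := Finset.sum_nonneg fun i _ => abs_nonneg _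
        exact pow_le_pow_left₀ hnn hL1 2
      rw [mul_pow] at h1
      refine h1.trans ?_
      exact mul_le_mul_of_nonneg_left hCS (by positivity)
    have : quad p B b - quad p A b ≤ D * ∑ i, (b i) ^ 2 := by
      refine hbound.trans ?_
      calc M * (∑ i, |b i|) ^ 2
          ≤ M * ((ξ + 1) ^ 2 * ((O.card : ℝ) * ∑ i, (b i) ^ 2)) :=
            mul_le_mul_of_nonneg_left hL2 hMnn
        _ = D * ∑ i, (b i) ^ 2 := by rw [hD]; ring
    linarith
  -- set of ratios
  set SA := {r | ∃ b ∈ cone p ξ O, b ≠ 0 ∧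
    r = Real.sqrt (quad p A b) / (∑ i, (b i) ^ 2) ^ ((1 : ℝ) / 2)} with hSA
  set SB := {r | ∃ b ∈ cone p ξ O, b ≠ 0 ∧
    r = Real.sqrt (quad p B b) / (∑ i, (b i) ^ 2) ^ ((1 : ℝ) / 2)} with hSB
  -- witness b0
  set b0 : Fin p → ℝ := Pi.single i0 1 with hb0
  have hb0cone : b0 ∈ cone p ξ O := by
    show ∑ i ∈ Oᶜ, |b0 i| ≤ ξ * ∑ i ∈ O, |b0 i|
    have h1 : ∑ i ∈ Oᶜ, |b0 i| = 0 := by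
      refine Finset.sum_eq_zero fun i hi => ?_
      have : i ≠ i0 := by
        intro h; subst h; exact (Finset.mem_compl.mp hi) hi0
      simp [hb0, Pi.single_eq_of_ne this]
    rw [h1]
    exact mul_nonneg (by linarith) (Finset.sum_nonneg fun i _ => abs_nonneg _)
  have hb0ne : b0 ≠ 0 := by
    intro h
    have := congrFun h i0
    simp [hb0] at this
  have hSAne : SA.Nonempty := ⟨_, b0, hb0cone, hb0ne, rfl⟩
  have hSBne : SB.Nonempty := ⟨_, b0, hb0cone, hb0ne, rfl⟩
  have hSAnn : ∀ r ∈ SA, 0 ≤ r := by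
    rintro r ⟨b, _, _, rfl⟩; positivity
  have hSBnn : ∀ r ∈ SB, 0 ≤ r := by
    rintro r ⟨b, _, _, rfl⟩; positivity
  have hSBbdd : BddBelow SB := ⟨0, fun r hr => hSBnn r hr⟩
  have hREA : RE p ξ O A = sInf SA := rfl
  have hREB : RE p ξ O B = sInf SB := rfl
  have hREAnn : 0 ≤ RE p ξ O A := Real.sInf_nonneg hSAnn
  have hREBnn : 0 ≤ RE p ξ O B := Real.sInf_nonneg hSBnn
  -- main pointwise bound on squares
  have main : ∀ r ∈ SA, RE p ξ O B ^ 2 - D ≤ r ^ 2 := by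
    rintro r ⟨b, hbcone, hbne, rfl⟩
    have hn : 0 < ∑ i, (b i) ^ 2 := by
      obtain ⟨i, hi⟩ := Function.ne_iff.mp hbne
      refine Finset.sum_pos' (fun i _ => by positivity) ⟨i, Finset.mem_univ i, ?_⟩
      have : b i ≠ 0 := hi
      positivity
    have hrB : RE p ξ O B ≤ Real.sqrt (quad p B b) / (∑ i, (b i) ^ 2) ^ ((1 : ℝ) / 2) :=
      csInf_le hSBbdd ⟨b, hbcone, hbne, rfl⟩
    have hrBnn : (0:ℝ) ≤ Real.sqrt (quad p B b) / (∑ i, (b i) ^ 2) ^ ((1 : ℝ) / 2) := by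
      positivity
    have hsq : RE p ξ O B ^ 2
        ≤ (Real.sqrt (quad p B b) / (∑ i, (b i) ^ 2) ^ ((1 : ℝ) / 2)) ^ 2 :=
      pow_le_pow_left₀ hREBnn hrB 2
    rw [sq_of_ratio (quad_nonneg hB b) hn] at hsq
    rw [sq_of_ratio (quad_nonneg hA b) hn]
    have hdiv : quad p B b / (∑ i, (b i) ^ 2) ≤ quad p A b / (∑ i, (b i) ^ 2) + D := by
      rw [div_add' _ _ _ hn.ne']
      gcongr
      linarith [key b hbcone]
    linarith
  -- conclude
  by_cases hc : RE p ξ O B ^ 2 - D ≤ 0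
  · exact hc.trans (sq_nonneg _)
  · push_neg at hc
    set c := RE p ξ O B ^ 2 - D with hcdef
    have hcpos : 0 < c := hc
    have hsqrt : Real.sqrt c ≤ RE p ξ O A := by
      rw [hREA]
      refine le_csInf hSAne fun r hr => ?_
      have h1 : c ≤ r ^ 2 := main r hr
      have h2 : Real.sqrt c ≤ Real.sqrt (r ^ 2) := Real.sqrt_le_sqrt h1
      rwa [Real.sqrt_sq (hSAnn r hr)] at h2
    have : Real.sqrt c ^ 2 ≤ RE p ξ O A ^ 2 :=
      pow_le_pow_left₀ (Real.sqrt_nonneg c) hsqrt 2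
    rwa [Real.sq_sqrt hcpos.le] at this
end

section
/- Let w_1,...,w_n ≥ 0 with ∑_i w_i > 0, let a_1,...,a_n ∈ R with ∑_i w_i a_i = 0, and set η = max_{i,j} |a_i − a_j|. Then ∑_i w_i a_i e^{a_i} / ∑_i w_i e^{a_i} ≥ e^{−η} · ∑_i w_i a_i² / ∑_i w_i. -/
open Finset Real

private lemma key_ptwise (x y z η : ℝ) (h1 : z - x ≤ η) (h2 : z - y ≤ η) :
    Real.exp (z - η) * (x - y) ^ 2 ≤ (x - y) * (Real.exp x - Real.exp y) := by
  wlog hxy : y ≤ x generalizing x y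
  · have h := this y x h2 h1 (le_of_not_ge hxy)
    nlinarith [h]
  have hez : Real.exp (z - η) ≤ Real.exp y := Real.exp_le_exp.2 (by linarith)
  have h3 : x - y + 1 ≤ Real.exp (x - y) := Real.add_one_le_exp (x - y)
  have h4 : Real.exp x - Real.exp y = Real.exp y * (Real.exp (x - y) - 1) := by
    rw [Real.exp_sub]; field_simp
  have hxy' : 0 ≤ x - y := by linarith
  nlinarith [Real.exp_pos y, sq_nonneg (x - y),
    mul_le_mul_of_nonneg_left hez (sq_nonneg (x - y)),
    mul_le_mul_of_nonneg_left (by linarith : x - y ≤ Real.exp (x - y) - 1)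
      (mul_nonneg hxy' (Real.exp_pos y).le)]

private lemma expand_double (n : ℕ) (w f g : Fin n → ℝ) :
    ∑ i, ∑ j, w i * w j * (f i - f j) * (g i - g j)
      = 2 * ((∑ i, w i) * (∑ i, w i * f i * g i)
          - (∑ i, w i * f i) * (∑ i, w i * g i)) := by
  have h : ∀ i : Fin n, ∑ j, w i * w j * (f i - f j) * (g i - g j)
      = w i * f i * g i * (∑ j, w j) - w i * f i * (∑ j, w j * g j)
        - w i * g i * (∑ j, w j * f j) + w i * (∑ j, w j * f j * g j) := by
    intro i
    rw [Finset.mul_sum, Finset.mul_sum, Finset.mul_sum, Finset.mul_sum,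
      ← Finset.sum_sub_distrib, ← Finset.sum_sub_distrib, ← Finset.sum_add_distrib]
    exact Finset.sum_congr rfl fun j _ => by ring
  rw [Finset.sum_congr rfl fun i _ => h i]
  rw [Finset.sum_add_distrib, Finset.sum_sub_distrib, Finset.sum_sub_distrib,
    ← Finset.sum_mul, ← Finset.sum_mul, ← Finset.sum_mul, ← Finset.sum_mul]
  ring

/-- Exponential tilting lower bound: if `∑ w_i a_i = 0` and `η = max_{i,j}|a_i - a_j|`,
then `∑ w_i a_i e^{a_i} / ∑ w_i e^{a_i} ≥ e^{-η} ∑ w_i a_i² / ∑ w_i`. -/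
theorem stmt7 (n : ℕ) (hn : 0 < n) (w a : Fin n → ℝ) (hw : ∀ i, 0 ≤ w i)
    (hpos : 0 < ∑ i, w i) (hmean : ∑ i, w i * a i = 0) :
    Real.exp (-(Finset.univ.sup' ⟨(⟨0, hn⟩, ⟨0, hn⟩), Finset.mem_univ _⟩
          (fun ij : Fin n × Fin n => |a ij.1 - a ij.2|))) *
        (∑ i, w i * (a i) ^ 2) / (∑ i, w i) ≤
      (∑ i, w i * a i * Real.exp (a i)) / (∑ i, w i * Real.exp (a i)) := by
  set η : ℝ := Finset.univ.sup' ⟨(⟨0, hn⟩, ⟨0, hn⟩), Finset.mem_univ _⟩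
      (fun ij : Fin n × Fin n => |a ij.1 - a ij.2|) with hη
  have habs : ∀ i j : Fin n, |a i - a j| ≤ η := fun i j =>
    Finset.le_sup' (f := fun ij : Fin n × Fin n => |a ij.1 - a ij.2|)
      (Finset.mem_univ (i, j))
  set W : ℝ := ∑ i, w i with hW
  set S : ℝ := ∑ i, w i * Real.exp (a i) with hS
  set N : ℝ := ∑ i, w i * a i * Real.exp (a i) with hN
  set Q : ℝ := ∑ i, w i * (a i) ^ 2 with hQ
  -- S > 0
  obtain ⟨i0, hi0⟩ : ∃ i, 0 < w i := by
    by_contra h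
    push_neg at h
    have : W = 0 := Finset.sum_eq_zero fun i _ => le_antisymm (h i) (hw i)
    linarith
  have hSpos : 0 < S :=
    Finset.sum_pos' (fun i _ => mul_nonneg (hw i) (Real.exp_pos _).le)
      ⟨i0, Finset.mem_univ _, mul_pos hi0 (Real.exp_pos _)⟩
  -- double sum identities
  have hD2 : ∑ i, ∑ j, w i * w j * (a i - a j) * (a i - a j) = 2 * W * Q := by
    rw [expand_double n w a a, hmean]
    have : ∀ i : Fin n, w i * a i * a i = w i * (a i) ^ 2 := fun i => by ring
    rw [Finset.sum_congr rfl fun i _ => this i]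
    ring
  have hD1 : ∑ i, ∑ j, w i * w j * (a i - a j) * (Real.exp (a i) - Real.exp (a j))
      = 2 * W * N := by
    rw [expand_double n w a (fun i => Real.exp (a i)), hmean]
    ring
  -- triple sum comparison
  have main : ∑ i, ∑ j, ∑ k, w i * w j * w k * (Real.exp (a k - η) * (a i - a j) ^ 2)
      ≤ ∑ i, ∑ j, ∑ k, w i * w j * w k *
          ((a i - a j) * (Real.exp (a i) - Real.exp (a j))) := by
    refine Finset.sum_le_sum fun i _ => Finset.sum_le_sum fun j _ =>
      Finset.sum_le_sum fun k _ => ?_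
    have hki : a k - a i ≤ η := (le_abs_self _).trans (habs k i)
    have hkj : a k - a j ≤ η := (le_abs_self _).trans (habs k j)
    exact mul_le_mul_of_nonneg_left (key_ptwise (a i) (a j) (a k) η hki hkj)
      (mul_nonneg (mul_nonneg (hw i) (hw j)) (hw k))
  -- rewrite both triple sums
  have l1 : ∑ i, ∑ j, ∑ k, w i * w j * w k * (Real.exp (a k - η) * (a i - a j) ^ 2)
      = (∑ i, ∑ j, w i * w j * (a i - a j) * (a i - a j)) * (Real.exp (-η) * S) := by
    have hin : Real.exp (-η) * S = ∑ k, w k * Real.exp (a k - η) := by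
      rw [hS, Finset.mul_sum]
      exact Finset.sum_congr rfl fun k _ => by rw [Real.exp_sub, Real.exp_neg]; ring
    rw [hin, Finset.sum_mul]
    refine Finset.sum_congr rfl fun i _ => ?_
    rw [Finset.sum_mul]
    refine Finset.sum_congr rfl fun j _ => ?_
    rw [Finset.mul_sum]
    exact Finset.sum_congr rfl fun k _ => by ring
  have r1 : ∑ i, ∑ j, ∑ k, w i * w j * w k *
        ((a i - a j) * (Real.exp (a i) - Real.exp (a j)))
      = (∑ i, ∑ j, w i * w j * (a i - a j) * (Real.exp (a i) - Real.exp (a j))) * W := by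
    rw [hW, Finset.sum_mul]
    refine Finset.sum_congr rfl fun i _ => ?_
    rw [Finset.sum_mul]
    refine Finset.sum_congr rfl fun j _ => ?_
    rw [Finset.mul_sum]
    exact Finset.sum_congr rfl fun k _ => by ring
  rw [l1, r1, hD2, hD1] at main
  -- conclude
  rw [div_le_div_iff₀ hpos hSpos]
  have h2W : (0 : ℝ) < 2 * W := by linarith
  have hfin : 2 * W * (Real.exp (-η) * Q * S) ≤ 2 * W * (N * W) := by
    calc 2 * W * (Real.exp (-η) * Q * S) = 2 * W * Q * (Real.exp (-η) * S) := by ring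
      _ ≤ 2 * W * N * W := main
      _ = 2 * W * (N * W) := by ring
  exact le_of_mul_le_mul_left hfin h2W
end

section
/- Let ℓ : R^p → R be convex and differentiable, let β° ∈ R^p, O = {j : β°_j ≠ 0}, λ > 0, and let β̂ minimize L(β) = ℓ(β) + λ|β|_1. Set θ̃ = β̂ − β° and z* = |∇ℓ(β°)|_∞. Then (λ − z*)|θ̃_{O^c}|_1 ≤ θ̃'(∇ℓ(β̂) − ∇ℓ(β°)) + (λ − z*)|θ̃_{O^c}|_1 ≤ (λ + z*)|θ̃_O|_1. In particular, for any ξ > 1, if z* ≤ λ(ξ−1)/(ξ+1) then |θ̃_{O^c}|_1 ≤ ξ|θ̃_O|_1. -/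
open Finset Real
open scoped Classical

lemma deriv_le_of_slope_le {φ : ℝ → ℝ} {a C : ℝ} (h : HasDerivAt φ a 0)
    (hb : ∀ t : ℝ, t ∈ Set.Ioc (0:ℝ) 1 → (φ t - φ 0) / t ≤ C) : a ≤ C := by
  have ht : Filter.Tendsto (slope φ 0) (nhdsWithin 0 (Set.Ioi 0)) (nhds a) := by
    refine (hasDerivAt_iff_tendsto_slope.1 h).mono_left ?_
    refine nhdsWithin_mono _ ?_
    intro x hx
    simp only [Set.mem_compl_iff, Set.mem_singleton_iff]
    exact ne_of_gt hx
  refine le_of_tendsto ht ?_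
  filter_upwards [Ioc_mem_nhdsGT_of_mem (by constructor <;> norm_num : (0:ℝ) ∈ Set.Ico 0 1)] with t ht
  simpa [slope_def_field] using hb t ht

lemma hasDerivAt_line {p : ℕ} {ℓ : (Fin p → ℝ) → ℝ} (hdiff : Differentiable ℝ ℓ)
    (x d : Fin p → ℝ) :
    HasDerivAt (fun t : ℝ => ℓ (x + t • d)) (fderiv ℝ ℓ x d) 0 := by
  have h1 : HasDerivAt (fun t : ℝ => x + t • d) d 0 := by
    simpa using ((hasDerivAt_id (0:ℝ)).smul_const d).const_add x
  have h2 := (hdiff x).hasFDerivAt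
  have h2' : HasFDerivAt ℓ (fderiv ℝ ℓ x) ((fun t : ℝ => x + t • d) 0) := by simpa using h2
  exact h2'.comp_hasDerivAt 0 h1

lemma grad_le {p : ℕ} {ℓ : (Fin p → ℝ) → ℝ} (hconv : ConvexOn ℝ Set.univ ℓ)
    (hdiff : Differentiable ℝ ℓ) (x y : Fin p → ℝ) :
    fderiv ℝ ℓ x (y - x) ≤ ℓ y - ℓ x := by
  refine deriv_le_of_slope_le (hasDerivAt_line hdiff x (y - x)) ?_
  intro t ht
  have hxy : x + t • (y - x) = (1 - t) • x + t • y := by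
    funext i; simp [Pi.smul_apply]; ring
  have hcv := hconv.2 (Set.mem_univ x) (Set.mem_univ y) (by linarith [ht.2] : (0:ℝ) ≤ 1 - t)
    (le_of_lt ht.1) (by ring)
  rw [hxy]
  rw [div_le_iff₀ ht.1]
  have h0 : x + (0:ℝ) • (y - x) = x := by funext i; simp
  rw [h0]
  simp only [smul_eq_mul] at hcv
  nlinarith [hcv]

lemma g_eq_fderiv {p : ℕ} {ℓ : (Fin p → ℝ) → ℝ} (hdiff : Differentiable ℝ ℓ)
    {g : (Fin p → ℝ) → Fin p → ℝ}
    (hg : ∀ β j, HasDerivAt (fun t => ℓ (Function.update β j t)) (g β j) (β j))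
    (β : Fin p → ℝ) (j : Fin p) : g β j = fderiv ℝ ℓ β ((Pi.single j 1 : Fin p → ℝ)) := by
  have hupd : ∀ t : ℝ, Function.update β j t = β + (t - β j) • (Pi.single j 1 : Fin p → ℝ) := by
    intro t; funext i
    by_cases h : i = j
    · subst h; simp
    · simp [Function.update_of_ne h, Pi.single_eq_of_ne h]
  have h1 : HasDerivAt (fun t : ℝ => β + (t - β j) • (Pi.single j 1 : Fin p → ℝ)) ((Pi.single j 1 : Fin p → ℝ)) (β j) := by
    simpa using (((hasDerivAt_id (β j)).sub_const (β j)).smul_const ((Pi.single j 1 : Fin p → ℝ))).const_add β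
  have h2 : HasFDerivAt ℓ (fderiv ℝ ℓ β) ((fun t : ℝ => β + (t - β j) • (Pi.single j 1 : Fin p → ℝ)) (β j)) := by
    simpa using (hdiff β).hasFDerivAt
  have h3 := h2.comp_hasDerivAt (β j) h1
  have h4 : HasDerivAt (fun t => ℓ (Function.update β j t)) (fderiv ℝ ℓ β ((Pi.single j 1 : Fin p → ℝ))) (β j) := by
    simp only [hupd]; exact h3
  exact (hg β j).unique h4

lemma fderiv_eq_sum {p : ℕ} {ℓ : (Fin p → ℝ) → ℝ} (x v : Fin p → ℝ) :
    fderiv ℝ ℓ x v = ∑ j, v j * fderiv ℝ ℓ x ((Pi.single j 1 : Fin p → ℝ)) := by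
  conv_lhs => rw [show v = ∑ j, v j • (Pi.single j 1 : Fin p → ℝ) by
    rw [← Finset.univ_sum_single v]; congr 1; funext j; funext i
    by_cases h : i = j
    · subst h; simp
    · simp [Pi.single_eq_of_ne h]]
  rw [map_sum]
  exact Finset.sum_congr rfl fun j _ => by rw [map_smul]; simp

/-- Basic inequality for the lasso (Lemma 1): with `θ̃ = β̂ - β°`,
`D^s = θ̃'(∇ℓ(β̂) - ∇ℓ(β°))` and `z* = |∇ℓ(β°)|_∞`,
`(λ - z*)|θ̃_{O^c}|_1 ≤ D^s + (λ - z*)|θ̃_{O^c}|_1 ≤ (λ + z*)|θ̃_O|_1`,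
and if `z* ≤ λ(ξ-1)/(ξ+1)` for `ξ > 1` then `|θ̃_{O^c}|_1 ≤ ξ|θ̃_O|_1`. -/
theorem stmt10 (p : ℕ) (hp : 0 < p) (ℓ : (Fin p → ℝ) → ℝ)
    (hconv : ConvexOn ℝ Set.univ ℓ) (hdiff : Differentiable ℝ ℓ)
    (g : (Fin p → ℝ) → Fin p → ℝ)
    (hg : ∀ β j, HasDerivAt (fun t => ℓ (Function.update β j t)) (g β j) (β j))
    (βo βh : Fin p → ℝ) (lam : ℝ) (hlam : 0 < lam)
    (hmin : ∀ β, ℓ βh + lam * ∑ j, |βh j| ≤ ℓ β + lam * ∑ j, |β j|) :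
    let O : Finset (Fin p) := Finset.univ.filter (fun j => βo j ≠ 0)
    let θ : Fin p → ℝ := fun j => βh j - βo j
    let z : ℝ := Finset.univ.sup' ⟨⟨0, hp⟩, Finset.mem_univ _⟩ (fun j => |g βo j|)
    ((lam - z) * ∑ j ∈ Oᶜ, |θ j| ≤
        (∑ j, θ j * (g βh j - g βo j)) + (lam - z) * ∑ j ∈ Oᶜ, |θ j|) ∧
      ((∑ j, θ j * (g βh j - g βo j)) + (lam - z) * ∑ j ∈ Oᶜ, |θ j| ≤
        (lam + z) * ∑ j ∈ O, |θ j|) ∧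
      (∀ ξ : ℝ, 1 < ξ → z ≤ lam * (ξ - 1) / (ξ + 1) →
        ∑ j ∈ Oᶜ, |θ j| ≤ ξ * ∑ j ∈ O, |θ j|) := by
  intro O θ z
  have hθ : θ = βh - βo := rfl
  -- sums over fin coordinates equal fderiv
  have hsum : ∀ x : Fin p → ℝ, ∑ j, θ j * g x j = fderiv ℝ ℓ x θ := by
    intro x
    rw [fderiv_eq_sum]
    exact Finset.sum_congr rfl fun j _ => by rw [g_eq_fderiv hdiff hg]
  set A := ∑ j ∈ O, |θ j| with hA'
  set B := ∑ j ∈ Oᶜ, |θ j| with hB'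
  have hA : 0 ≤ A := Finset.sum_nonneg fun j _ => abs_nonneg _
  have hB : 0 ≤ B := Finset.sum_nonneg fun j _ => abs_nonneg _
  have hgz : ∀ j, |g βo j| ≤ z := by
    intro j
    show |g βo j| ≤ Finset.univ.sup' ⟨⟨0, hp⟩, Finset.mem_univ _⟩ (fun j => |g βo j|)
    exact Finset.le_sup' (fun j => |g βo j|) (Finset.mem_univ j)
  have hz0 : 0 ≤ z := le_trans (abs_nonneg _) (hgz ⟨0, hp⟩)
  -- D expressed with fderiv
  have hD : ∑ j, θ j * (g βh j - g βo j)
      = fderiv ℝ ℓ βh θ - fderiv ℝ ℓ βo θ := by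
    rw [← hsum βh, ← hsum βo, ← Finset.sum_sub_distrib]
    exact Finset.sum_congr rfl fun j _ => by ring
  -- convexity: D ≥ 0
  have hg1 : fderiv ℝ ℓ βo θ ≤ ℓ βh - ℓ βo := by
    have := grad_le hconv hdiff βo βh
    rwa [← hθ] at this
  have hg2 : ℓ βh - ℓ βo ≤ fderiv ℝ ℓ βh θ := by
    have := grad_le hconv hdiff βh βo
    have hneg : βo - βh = -θ := by funext i; simp [hθ]
    rw [hneg, map_neg] at this
    linarith
  have hDge : 0 ≤ ∑ j, θ j * (g βh j - g βo j) := by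
    rw [hD]; linarith
  -- KKT: fderiv βh θ ≤ lam * (Sβo - Sβh)
  have hS1 : ∑ j, |βo j| - ∑ j, |βh j| ≤ A - B := by
    have hsplit : ∑ j, (|βo j| - |βh j|) = (∑ j ∈ O, (|βo j| - |βh j|))
        + ∑ j ∈ Oᶜ, (|βo j| - |βh j|) := (Finset.sum_add_sum_compl O _).symm
    have h1 : ∑ j ∈ O, (|βo j| - |βh j|) ≤ A := by
      refine Finset.sum_le_sum fun j _ => ?_
      have := abs_sub_abs_le_abs_sub (βo j) (βh j)
      have h2 : |βo j - βh j| = |θ j| := by rw [abs_sub_comm]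
      linarith [h2 ▸ this]
    have h2 : ∑ j ∈ Oᶜ, (|βo j| - |βh j|) = -B := by
      rw [hB', ← Finset.sum_neg_distrib]
      refine Finset.sum_congr rfl fun j hj => ?_
      have hj0 : βo j = 0 := by
        simpa [O, Finset.mem_compl, Finset.mem_filter] using hj
      simp [hθ, hj0]
    rw [Finset.sum_sub_distrib] at hsplit
    linarith
  have hKKT : fderiv ℝ ℓ βh θ ≤ lam * (∑ j, |βo j| - ∑ j, |βh j|) := by
    set d : Fin p → ℝ := βo - βh with hd
    have hdθ : fderiv ℝ ℓ βh θ = -(fderiv ℝ ℓ βh d) := by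
      have : θ = -d := by funext i; simp [hθ, hd]
      rw [this, map_neg]
    rw [hdθ]
    have hneg : -(fderiv ℝ ℓ βh d) ≤ lam * (∑ j, |βo j| - ∑ j, |βh j|) := by
      refine deriv_le_of_slope_le ((hasDerivAt_line hdiff βh d).neg) ?_
      intro t ht
      have hxy : βh + t • d = (1 - t) • βh + t • βo := by
        funext i; simp [hd, Pi.smul_apply]; ring
      have hS : ∑ j, |(βh + t • d) j| ≤ (1 - t) * ∑ j, |βh j| + t * ∑ j, |βo j| := by
        rw [hxy, Finset.mul_sum, Finset.mul_sum, ← Finset.sum_add_distrib]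
        refine Finset.sum_le_sum fun j _ => ?_
        calc |((1 - t) • βh + t • βo) j| = |(1 - t) * βh j + t * βo j| := by simp [Pi.smul_apply]
          _ ≤ |(1 - t) * βh j| + |t * βo j| := abs_add_le _ _
          _ = (1 - t) * |βh j| + t * |βo j| := by
              rw [abs_mul, abs_mul, abs_of_nonneg (by linarith [ht.2] : (0:ℝ) ≤ 1 - t),
                abs_of_nonneg (le_of_lt ht.1)]
      have hmin' := hmin (βh + t • d)
      have h0 : βh + (0:ℝ) • d = βh := by funext i; simp
      simp only [Pi.neg_apply, h0]
      rw [div_le_iff₀ ht.1]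
      nlinarith [hmin', hS]
    exact hneg
  -- bound on ∑ θ j * g βo j
  have hbnd : |fderiv ℝ ℓ βo θ| ≤ z * (A + B) := by
    rw [← hsum βo]
    calc |∑ j, θ j * g βo j| ≤ ∑ j, |θ j * g βo j| := Finset.abs_sum_le_sum_abs _ _
      _ ≤ ∑ j, |θ j| * z := by
          refine Finset.sum_le_sum fun j _ => ?_
          rw [abs_mul]
          exact mul_le_mul_of_nonneg_left (hgz j) (abs_nonneg _)
      _ = z * (A + B) := by
          rw [← Finset.sum_mul, mul_comm]
          congr 1
          rw [hA', hB']
          exact (Finset.sum_add_sum_compl O _).symm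
  have hbnd' : -(z * (A + B)) ≤ fderiv ℝ ℓ βo θ := neg_le_of_abs_le hbnd
  -- second inequality
  have hIneq2 : (∑ j, θ j * (g βh j - g βo j)) + (lam - z) * B ≤ (lam + z) * A := by
    rw [hD]
    have hlS : lam * (∑ j, |βo j| - ∑ j, |βh j|) ≤ lam * (A - B) :=
      mul_le_mul_of_nonneg_left hS1 (le_of_lt hlam)
    nlinarith [hKKT, hbnd', hlS]
  refine ⟨by linarith, hIneq2, ?_⟩
  intro ξ hξ hzle
  have hξ1 : (0:ℝ) < ξ + 1 := by linarith
  have hz' : z * (ξ + 1) ≤ lam * (ξ - 1) := by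
    rw [← le_div_iff₀ hξ1]; exact hzle
  have hpos : 0 < lam - z := by nlinarith
  have h1 : (lam - z) * B ≤ (lam + z) * A := le_trans (by linarith) hIneq2
  have h2 : (lam + z) * A ≤ (lam - z) * (ξ * A) := by nlinarith
  have := le_trans h1 h2
  exact le_of_mul_le_mul_left (by linarith) hpos
end

section
/- Let X_1,...,X_n be independent random variables and let f_{i,j} = f_{i,j}(X_i, X_j) be measurable functions with |f_{i,j}| ≤ 1 and E[f_{i,j} | X_i] = E[f_{i,j} | X_j] = 0 for all i ≠ j. Let V_n = ∑_{i=1}^n ∑_{j=1}^n f_{i,j}. Then for every m ≥ 0, E[V_n^m] ≤ (2m)! · ∑_{k_1+···+k_n = 2m} ∏_{j=1}^n 1{k_j ≠ 1}/k_j!, where the sum is over nonnegative integer tuples. -/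
open Finset MeasureTheory ProbabilityTheory

set_option linter.unusedSectionVars false

section counting
variable {α ι : Type*} [Fintype α] [DecidableEq α] [Fintype ι] [DecidableEq ι]

/-- Glue fiberwise permutations into a permutation of `α`. -/
def gluePerm (d : α → ι) (π : ∀ j, Equiv.Perm {x // d x = j}) : Equiv.Perm α :=
  (Equiv.sigmaFiberEquiv d).symm.trans
    ((Equiv.sigmaCongrRight π).trans (Equiv.sigmaFiberEquiv d))

lemma gluePerm_apply (d : α → ι) (π : ∀ j, Equiv.Perm {x // d x = j}) (x : α) :
    gluePerm d π x = (π (d x) ⟨x, rfl⟩ : {y // d y = d x}) := rfl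

lemma comp_gluePerm (d : α → ι) (π : ∀ j, Equiv.Perm {x // d x = j}) (x : α) :
    d (gluePerm d π x) = d x :=
  (π (d x) ⟨x, rfl⟩).2

lemma gluePerm_injective (d : α → ι) : Function.Injective (gluePerm d) := by
  intro π π' h
  funext j
  apply Equiv.ext
  rintro ⟨x, hx⟩
  subst hx
  have := congrArg (fun (e : Equiv.Perm α) => e x) h
  simpa [gluePerm_apply, Subtype.ext_iff] using this

lemma count_bound (k : ι → ℕ)
    [DecidablePred fun d : α → ι => ∀ j, (univ.filter fun x => d x = j).card = k j] :
    (univ.filter fun d : α → ι => ∀ j, (univ.filter fun x => d x = j).card = k j).card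
      * ∏ j, (k j).factorial ≤ (Fintype.card α).factorial := by
  classical
  set T := univ.filter fun d : α → ι => ∀ j, (univ.filter fun x => d x = j).card = k j with hT
  rcases T.eq_empty_or_nonempty with h | ⟨d₀, hd₀⟩
  · simp [h]
  have hd₀c : ∀ j, (univ.filter fun x => d₀ x = j).card = k j :=
    (mem_filter.mp hd₀).2
  set F : Equiv.Perm α → (α → ι) := fun σ => d₀ ∘ σ with hF
  -- T is contained in the image of F
  have hsub : T ⊆ univ.image F := by
    intro d hd
    have hdc : ∀ j, (univ.filter fun x => d x = j).card = k j := (mem_filter.mp hd).2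
    have eqv : ∀ j, {x // d x = j} ≃ {x // d₀ x = j} := fun j =>
      Fintype.equivOfCardEq (by
        rw [Fintype.card_subtype, Fintype.card_subtype, hdc j, hd₀c j])
    refine mem_image.mpr ⟨(Equiv.sigmaFiberEquiv d).symm.trans
      ((Equiv.sigmaCongrRight eqv).trans (Equiv.sigmaFiberEquiv d₀)), mem_univ _, ?_⟩
    funext x
    exact (eqv (d x) ⟨x, rfl⟩).2
  -- each fiber of F has at least ∏ (k j)! elements
  have hfiber : ∀ e ∈ univ.image F, ∏ j, (k j).factorial ≤
      (univ.filter fun σ => F σ = e).card := by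
    rintro e he
    obtain ⟨σ₀, -, rfl⟩ := mem_image.mp he
    have hΦ : Function.Injective
        (fun π : ∀ j, Equiv.Perm {x // d₀ x = j} =>
          (⟨σ₀.trans (gluePerm d₀ π), by
            funext x
            exact comp_gluePerm d₀ π (σ₀ x)⟩ :
            {σ : Equiv.Perm α // F σ = F σ₀})) := by
      intro π π' h
      have h2 : σ₀.trans (gluePerm d₀ π) = σ₀.trans (gluePerm d₀ π') :=
        congrArg Subtype.val h
      apply gluePerm_injective d₀
      apply Equiv.ext
      intro x
      have := congrArg (fun (e : Equiv.Perm α) => e (σ₀.symm x)) h2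
      simpa using this
    have hcard := Fintype.card_le_of_injective _ hΦ
    have h1 : Fintype.card (∀ j, Equiv.Perm {x // d₀ x = j}) = ∏ j, (k j).factorial := by
      rw [Fintype.card_pi]
      refine Finset.prod_congr rfl fun j _ => ?_
      rw [Fintype.card_perm, Fintype.card_subtype, hd₀c j]
    have h2 : Fintype.card {σ : Equiv.Perm α // F σ = F σ₀} =
        (univ.filter fun σ => F σ = F σ₀).card := Fintype.card_subtype _
    rw [h1, h2] at hcard
    exact hcard
  calc T.card * ∏ j, (k j).factorial
      ≤ (univ.image F).card * ∏ j, (k j).factorial :=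
        Nat.mul_le_mul_right _ (card_le_card hsub)
    _ = ∑ _e ∈ univ.image F, ∏ j, (k j).factorial := by
        rw [Finset.sum_const, smul_eq_mul, mul_comm]
    _ ≤ ∑ e ∈ univ.image F, (univ.filter fun σ => F σ = e).card :=
        Finset.sum_le_sum hfiber
    _ = (univ : Finset (Equiv.Perm α)).card :=
        (Finset.card_eq_sum_card_fiberwise fun σ _ => mem_image_of_mem F (mem_univ σ)).symm
    _ = (Fintype.card α).factorial := by
        rw [card_univ, Fintype.card_perm]

end counting

lemma zero_term {Ω : Type*} [MeasurableSpace Ω] (μ : Measure Ω)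
    [IsProbabilityMeasure μ] {n : ℕ} (X : Fin n → Ω → ℝ)
    (hXmeas : ∀ i, Measurable (X i))
    (hindep : iIndepFun X μ)
    (f : Fin n → Fin n → ℝ → ℝ → ℝ)
    (hfmeas : ∀ i j, Measurable (Function.uncurry (f i j)))
    (hbd : ∀ i j x y, |f i j x y| ≤ 1)
    (hdeg1 : ∀ i j, i ≠ j → ∀ x : ℝ, ∫ ω, f i j x (X j ω) ∂μ = 0)
    (hdeg2 : ∀ i j, i ≠ j → ∀ y : ℝ, ∫ ω, f i j (X i ω) y ∂μ = 0)
    {m : ℕ} (c : Fin m → Fin n × Fin n) (a : Fin n)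
    (hcount : (univ.filter fun s : Fin m × Bool =>
        (cond s.2 (c s.1).2 (c s.1).1) = a).card = 1) :
    ∫ ω, ∏ t, f (c t).1 (c t).2 (X (c t).1 ω) (X (c t).2 ω) ∂μ = 0 := by
  classical
  obtain ⟨s₀, hs₀⟩ := Finset.card_eq_one.mp hcount
  have hs₀mem : (cond s₀.2 (c s₀.1).2 (c s₀.1).1) = a := by
    have : s₀ ∈ univ.filter fun s : Fin m × Bool =>
        (cond s.2 (c s.1).2 (c s.1).1) = a := by rw [hs₀]; exact mem_singleton_self _
    exact (mem_filter.mp this).2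
  have huniq : ∀ s : Fin m × Bool, (cond s.2 (c s.1).2 (c s.1).1) = a → s = s₀ := by
    intro s hs
    have : s ∈ univ.filter fun s : Fin m × Bool =>
        (cond s.2 (c s.1).2 (c s.1).1) = a := mem_filter.mpr ⟨mem_univ _, hs⟩
    rw [hs₀] at this
    exact mem_singleton.mp this
  -- the independence setup
  set T : Finset (Fin n) := univ.erase a with hTdef
  set W : Ω → ({x // x ∈ T} → ℝ) := fun ω i => X i ω with hW
  set U : Ω → ({x // x ∈ ({a} : Finset (Fin n))} → ℝ) := fun ω i => X i ω with hU
  have hWmeas : Measurable W := measurable_pi_lambda _ fun i => hXmeas i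
  have hUmeas : Measurable U := measurable_pi_lambda _ fun i => hXmeas i
  have hdisj : Disjoint T ({a} : Finset (Fin n)) :=
    Finset.disjoint_singleton_right.mpr (Finset.notMem_erase a univ)
  have hInd : IndepFun W U μ := hindep.indepFun_finset T {a} hdisj hXmeas
  have hmap : μ.map (fun ω => (W ω, U ω)) = (μ.map W).prod (μ.map U) :=
    (indepFun_iff_map_prod_eq_prod_map_map hWmeas.aemeasurable hUmeas.aemeasurable).mp hInd
  -- coordinate selector
  set sel : (({x // x ∈ T} → ℝ) × ({x // x ∈ ({a} : Finset (Fin n))} → ℝ)) → Fin n → ℝ :=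
    fun p i => if h : i = a then p.2 ⟨i, by simp [h]⟩
      else p.1 ⟨i, by simp [hTdef, h]⟩ with hsel
  have hselmeas : ∀ i, Measurable fun p => sel p i := by
    intro i
    by_cases h : i = a
    · simp only [hsel, dif_pos h]
      exact (measurable_pi_apply _).comp measurable_snd
    · simp only [hsel, dif_neg h]
      exact (measurable_pi_apply _).comp measurable_fst
  set H : (({x // x ∈ T} → ℝ) × ({x // x ∈ ({a} : Finset (Fin n))} → ℝ)) → ℝ :=
    fun p => ∏ t, f (c t).1 (c t).2 (sel p (c t).1) (sel p (c t).2) with hH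
  have hHmeas : Measurable H :=
    Finset.measurable_prod _ fun t _ =>
      (hfmeas _ _).comp ((hselmeas _).prodMk (hselmeas _))
  have hsel_eq : ∀ ω i, sel (W ω, U ω) i = X i ω := by
    intro ω i
    by_cases h : i = a
    · simp only [hsel, dif_pos h, hU]
    · simp only [hsel, dif_neg h, hW]
  have hcomp : ∀ ω, H (W ω, U ω) = ∏ t, f (c t).1 (c t).2 (X (c t).1 ω) (X (c t).2 ω) := by
    intro ω
    exact Finset.prod_congr rfl fun t _ => by rw [hsel_eq, hsel_eq]
  have hHbd : ∀ p, |H p| ≤ 1 := by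
    intro p
    rw [hH, Finset.abs_prod]
    exact Finset.prod_le_one (fun t _ => abs_nonneg _) (fun t _ => hbd _ _ _ _)
  -- instances
  have hPW : IsProbabilityMeasure (μ.map W) := Measure.isProbabilityMeasure_map hWmeas.aemeasurable
  have hPU : IsProbabilityMeasure (μ.map U) := Measure.isProbabilityMeasure_map hUmeas.aemeasurable
  have hHint : Integrable H ((μ.map W).prod (μ.map U)) :=
    (integrable_const 1).mono' hHmeas.aestronglyMeasurable
      (Filter.Eventually.of_forall fun p => by simpa using hHbd p)
  -- rewrite the integral
  have step1 : ∫ ω, ∏ t, f (c t).1 (c t).2 (X (c t).1 ω) (X (c t).2 ω) ∂μ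
      = ∫ p, H p ∂((μ.map W).prod (μ.map U)) := by
    rw [← hmap, integral_map (hWmeas.prodMk hUmeas).aemeasurable
      hHmeas.aestronglyMeasurable]
    exact integral_congr_ae (Filter.Eventually.of_forall fun ω => (hcomp ω).symm)
  rw [step1, MeasureTheory.integral_prod _ hHint]
  -- now show the inner integral vanishes for every v
  have hinner : ∀ v, ∫ u, H (v, u) ∂(μ.map U) = 0 := by
    intro v
    set g : Fin n → ℝ := fun i => if h : i = a then 0 else v ⟨i, by simp [hTdef, h]⟩ with hg
    have hselg : ∀ u i, i ≠ a → sel (v, u) i = g i := by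
      intro u i h
      simp only [hsel, hg, dif_neg h]
    have hsela : ∀ u : ({x // x ∈ ({a} : Finset (Fin n))} → ℝ),
        sel (v, u) a = u ⟨a, mem_singleton_self a⟩ := by
      intro u
      simp only [hsel, dif_pos rfl]
    set t₀ := s₀.1 with ht₀
    -- facts about the other slots
    have hother : ∀ t, t ≠ t₀ → (c t).1 ≠ a ∧ (c t).2 ≠ a := by
      intro t ht
      constructor
      · intro h
        exact ht (congrArg Prod.fst (huniq (t, false) h))
      · intro h
        exact ht (congrArg Prod.fst (huniq (t, true) h))
    -- integral of the special factor
    rcases hb : s₀.2 with _ | _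
    · -- s₀.2 = false : (c t₀).1 = a
      have ha1 : (c t₀).1 = a := by rw [ht₀]; rw [hb] at hs₀mem; exact hs₀mem
      have ha2 : (c t₀).2 ≠ a := by
        intro h
        have h2 := congrArg Prod.snd (huniq (t₀, true) h)
        rw [hb] at h2
        simp at h2
      have key : ∀ u, H (v, u) = f (c t₀).1 (c t₀).2 (u ⟨a, mem_singleton_self a⟩) (g (c t₀).2)
          * ∏ t ∈ univ.erase t₀, f (c t).1 (c t).2 (g (c t).1) (g (c t).2) := by
        intro u
        show (∏ t, f (c t).1 (c t).2 (sel (v, u) (c t).1) (sel (v, u) (c t).2)) = _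
        rw [← Finset.mul_prod_erase univ _ (mem_univ t₀)]
        congr 1
        · rw [ha1, hsela u, hselg u _ ha2]
        · exact Finset.prod_congr rfl fun t ht => by
            obtain ⟨h1, h2⟩ := hother t (mem_erase.mp ht).1
            rw [hselg u _ h1, hselg u _ h2]
      calc ∫ u, H (v, u) ∂(μ.map U)
          = (∫ u, f (c t₀).1 (c t₀).2 (u ⟨a, mem_singleton_self a⟩) (g (c t₀).2) ∂(μ.map U))
            * ∏ t ∈ univ.erase t₀, f (c t).1 (c t).2 (g (c t).1) (g (c t).2) := by
            rw [← integral_mul_const]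
            exact integral_congr_ae (Filter.Eventually.of_forall fun u => key u)
        _ = 0 := by
            have hne : (c t₀).1 ≠ (c t₀).2 := by
              rw [ha1]; exact fun h => ha2 h.symm
            have hφm : AEStronglyMeasurable
                (fun u : {x // x ∈ ({a} : Finset (Fin n))} → ℝ =>
                  f (c t₀).1 (c t₀).2 (u ⟨a, mem_singleton_self a⟩) (g (c t₀).2))
                (Measure.map U μ) := by
              have h1 : Measurable (fun u : {x // x ∈ ({a} : Finset (Fin n))} → ℝ =>
                  (u ⟨a, mem_singleton_self a⟩, g (c t₀).2)) :=
                (measurable_pi_apply _).prodMk measurable_const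
              exact ((hfmeas (c t₀).1 (c t₀).2).comp h1).aestronglyMeasurable
            have hmapφ : ∫ u, f (c t₀).1 (c t₀).2 (u ⟨a, mem_singleton_self a⟩)
                  (g (c t₀).2) ∂(Measure.map U μ)
                = ∫ ω, f (c t₀).1 (c t₀).2 (U ω ⟨a, mem_singleton_self a⟩)
                  (g (c t₀).2) ∂μ :=
              integral_map hUmeas.aemeasurable hφm
            have h0 : ∫ ω, f (c t₀).1 (c t₀).2 (U ω ⟨a, mem_singleton_self a⟩)
                (g (c t₀).2) ∂μ = 0 := by
              have heq : (fun ω => f (c t₀).1 (c t₀).2 (U ω ⟨a, mem_singleton_self a⟩)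
                    (g (c t₀).2))
                  = fun ω => f (c t₀).1 (c t₀).2 (X (c t₀).1 ω) (g (c t₀).2) := by
                funext ω; rw [ha1]
              rw [heq]
              exact hdeg2 (c t₀).1 (c t₀).2 hne (g (c t₀).2)
            rw [hmapφ, h0, zero_mul]
    · -- s₀.2 = true : (c t₀).2 = a
      have ha1 : (c t₀).2 = a := by rw [ht₀]; rw [hb] at hs₀mem; exact hs₀mem
      have ha2 : (c t₀).1 ≠ a := by
        intro h
        have h2 := congrArg Prod.snd (huniq (t₀, false) h)
        rw [hb] at h2
        simp at h2
      have key : ∀ u, H (v, u) = f (c t₀).1 (c t₀).2 (g (c t₀).1) (u ⟨a, mem_singleton_self a⟩)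
          * ∏ t ∈ univ.erase t₀, f (c t).1 (c t).2 (g (c t).1) (g (c t).2) := by
        intro u
        show (∏ t, f (c t).1 (c t).2 (sel (v, u) (c t).1) (sel (v, u) (c t).2)) = _
        rw [← Finset.mul_prod_erase univ _ (mem_univ t₀)]
        congr 1
        · rw [ha1, hsela u, hselg u _ ha2]
        · exact Finset.prod_congr rfl fun t ht => by
            obtain ⟨h1, h2⟩ := hother t (mem_erase.mp ht).1
            rw [hselg u _ h1, hselg u _ h2]
      calc ∫ u, H (v, u) ∂(μ.map U)
          = (∫ u, f (c t₀).1 (c t₀).2 (g (c t₀).1) (u ⟨a, mem_singleton_self a⟩) ∂(μ.map U))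
            * ∏ t ∈ univ.erase t₀, f (c t).1 (c t).2 (g (c t).1) (g (c t).2) := by
            rw [← integral_mul_const]
            exact integral_congr_ae (Filter.Eventually.of_forall fun u => key u)
        _ = 0 := by
            have hne : (c t₀).1 ≠ (c t₀).2 := by
              rw [ha1]; exact ha2
            have hφm : AEStronglyMeasurable
                (fun u : {x // x ∈ ({a} : Finset (Fin n))} → ℝ =>
                  f (c t₀).1 (c t₀).2 (g (c t₀).1) (u ⟨a, mem_singleton_self a⟩))
                (Measure.map U μ) := by
              have h1 : Measurable (fun u : {x // x ∈ ({a} : Finset (Fin n))} → ℝ =>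
                  (g (c t₀).1, u ⟨a, mem_singleton_self a⟩)) :=
                measurable_const.prodMk (measurable_pi_apply _)
              exact ((hfmeas (c t₀).1 (c t₀).2).comp h1).aestronglyMeasurable
            have hmapφ : ∫ u, f (c t₀).1 (c t₀).2 (g (c t₀).1)
                  (u ⟨a, mem_singleton_self a⟩) ∂(Measure.map U μ)
                = ∫ ω, f (c t₀).1 (c t₀).2 (g (c t₀).1)
                  (U ω ⟨a, mem_singleton_self a⟩) ∂μ :=
              integral_map hUmeas.aemeasurable hφm
            have h0 : ∫ ω, f (c t₀).1 (c t₀).2 (g (c t₀).1)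
                (U ω ⟨a, mem_singleton_self a⟩) ∂μ = 0 := by
              have heq : (fun ω => f (c t₀).1 (c t₀).2 (g (c t₀).1)
                    (U ω ⟨a, mem_singleton_self a⟩))
                  = fun ω => f (c t₀).1 (c t₀).2 (g (c t₀).1) (X (c t₀).2 ω) := by
                funext ω; rw [ha1]
              rw [heq]
              exact hdeg1 (c t₀).1 (c t₀).2 hne (g (c t₀).1)
            rw [hmapφ, h0, zero_mul]
  calc ∫ v, ∫ u, H (v, u) ∂(μ.map U) ∂(μ.map W)
      = ∫ v, (0:ℝ) ∂(μ.map W) := integral_congr_ae (Filter.Eventually.of_forall hinner)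
    _ = 0 := integral_zero _ _


/-- slot count: number of occurrences of index `j` among the `2m` coordinate slots of `c`. -/
def slotCount {n m : ℕ} (c : Fin m → Fin n × Fin n) (j : Fin n) : ℕ :=
  (univ.filter fun s : Fin m × Bool => (cond s.2 (c s.1).2 (c s.1).1) = j).card

/-- Moment bound for degenerate V-statistics: if `|f_{ij}| ≤ 1` and the kernels are
degenerate, then `E[V_n^m] ≤ (2m)! ∑_{k₁+⋯+kₙ=2m} ∏_j 1{k_j ≠ 1}/k_j!`. -/
theorem stmt16 {Ω : Type*} [MeasurableSpace Ω] (μ : Measure Ω)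
    [IsProbabilityMeasure μ] (n : ℕ) (X : Fin n → Ω → ℝ)
    (hXmeas : ∀ i, Measurable (X i))
    (hindep : iIndepFun X μ)
    (f : Fin n → Fin n → ℝ → ℝ → ℝ)
    (hfmeas : ∀ i j, Measurable (Function.uncurry (f i j)))
    (hbd : ∀ i j x y, |f i j x y| ≤ 1)
    (hdeg1 : ∀ i j, i ≠ j → ∀ x : ℝ, ∫ ω, f i j x (X j ω) ∂μ = 0)
    (hdeg2 : ∀ i j, i ≠ j → ∀ y : ℝ, ∫ ω, f i j (X i ω) y ∂μ = 0)
    (m : ℕ) :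
    (∫ ω, (∑ i, ∑ j, f i j (X i ω) (X j ω)) ^ m ∂μ) ≤
      (Nat.factorial (2 * m) : ℝ) *
        ∑ k ∈ Finset.Nat.antidiagonalTuple n (2 * m),
          ∏ j, (if k j = 1 then 0 else 1 / (Nat.factorial (k j) : ℝ)) := by
  classical
  -- the individual terms of the expansion
  have htermmeas : ∀ c : Fin m → Fin n × Fin n,
      Measurable (fun ω => ∏ t, f (c t).1 (c t).2 (X (c t).1 ω) (X (c t).2 ω)) := by
    intro c
    refine Finset.measurable_prod _ fun t _ => ?_
    have h1 : Measurable fun ω => (X (c t).1 ω, X (c t).2 ω) :=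
      (hXmeas _).prodMk (hXmeas _)
    exact (hfmeas (c t).1 (c t).2).comp h1
  have htermbd : ∀ (c : Fin m → Fin n × Fin n) (ω : Ω),
      |∏ t, f (c t).1 (c t).2 (X (c t).1 ω) (X (c t).2 ω)| ≤ 1 := by
    intro c ω
    rw [Finset.abs_prod]
    exact Finset.prod_le_one (fun t _ => abs_nonneg _) (fun t _ => hbd _ _ _ _)
  have htermint : ∀ c : Fin m → Fin n × Fin n,
      Integrable (fun ω => ∏ t, f (c t).1 (c t).2 (X (c t).1 ω) (X (c t).2 ω)) μ := by
    intro c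
    exact (integrable_const 1).mono' (htermmeas c).aestronglyMeasurable
      (Filter.Eventually.of_forall fun ω => by
        rw [Real.norm_eq_abs]; exact htermbd c ω)
  -- expansion of the power
  have hexp : ∀ ω, (∑ i, ∑ j, f i j (X i ω) (X j ω)) ^ m
      = ∑ c : Fin m → Fin n × Fin n,
          ∏ t, f (c t).1 (c t).2 (X (c t).1 ω) (X (c t).2 ω) := by
    intro ω
    have h2 : (∑ i, ∑ j, f i j (X i ω) (X j ω))
        = ∑ p : Fin n × Fin n, f p.1 p.2 (X p.1 ω) (X p.2 ω) :=
      (Fintype.sum_prod_type (f := fun p : Fin n × Fin n => f p.1 p.2 (X p.1 ω) (X p.2 ω))).symm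
    calc (∑ i, ∑ j, f i j (X i ω) (X j ω)) ^ m
        = (∑ p : Fin n × Fin n, f p.1 p.2 (X p.1 ω) (X p.2 ω)) ^ m := by rw [h2]
      _ = ∏ _t : Fin m, ∑ p : Fin n × Fin n, f p.1 p.2 (X p.1 ω) (X p.2 ω) := by
          rw [Finset.prod_const, Finset.card_univ, Fintype.card_fin]
      _ = ∑ c ∈ Fintype.piFinset (fun _ : Fin m => (univ : Finset (Fin n × Fin n))),
            ∏ t, f (c t).1 (c t).2 (X (c t).1 ω) (X (c t).2 ω) :=
          Finset.prod_univ_sum _ _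
      _ = ∑ c : Fin m → Fin n × Fin n,
            ∏ t, f (c t).1 (c t).2 (X (c t).1 ω) (X (c t).2 ω) := by
          rw [Fintype.piFinset_univ]
  -- total number of slots
  have hsum : ∀ c : Fin m → Fin n × Fin n, ∑ j, slotCount c j = 2 * m := by
    intro c
    unfold slotCount
    rw [← Finset.card_eq_sum_card_fiberwise
      (f := fun s : Fin m × Bool => cond s.2 (c s.1).2 (c s.1).1)
      (s := univ) (t := univ) (fun s _ => mem_univ _)]
    rw [card_univ, Fintype.card_prod, Fintype.card_fin, Fintype.card_bool, mul_comm]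
  set GOOD : Finset (Fin m → Fin n × Fin n) :=
    univ.filter fun c => ∀ j, slotCount c j ≠ 1 with hGOOD
  -- main chain of inequalities
  calc ∫ ω, (∑ i, ∑ j, f i j (X i ω) (X j ω)) ^ m ∂μ
      = ∫ ω, ∑ c : Fin m → Fin n × Fin n,
          ∏ t, f (c t).1 (c t).2 (X (c t).1 ω) (X (c t).2 ω) ∂μ :=
        integral_congr_ae (Filter.Eventually.of_forall hexp)
    _ = ∑ c : Fin m → Fin n × Fin n,
          ∫ ω, ∏ t, f (c t).1 (c t).2 (X (c t).1 ω) (X (c t).2 ω) ∂μ :=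
        integral_finset_sum _ (fun c _ => htermint c)
    _ ≤ ∑ c : Fin m → Fin n × Fin n, (if ∀ j, slotCount c j ≠ 1 then (1:ℝ) else 0) := by
        refine Finset.sum_le_sum fun c _ => ?_
        by_cases hgood : ∀ j, slotCount c j ≠ 1
        · rw [if_pos hgood]
          have h1 : ∫ ω, ∏ t, f (c t).1 (c t).2 (X (c t).1 ω) (X (c t).2 ω) ∂μ
              ≤ ∫ _ω, (1:ℝ) ∂μ := by
            refine integral_mono (htermint c) (integrable_const 1) fun ω => ?_
            exact (le_abs_self _).trans (htermbd c ω)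
          have h2 : (∫ _ω, (1:ℝ) ∂μ) = 1 := by simp
          rw [h2] at h1
          exact h1
        · rw [if_neg hgood]
          push_neg at hgood
          obtain ⟨a, ha⟩ := hgood
          exact le_of_eq
            (zero_term μ X hXmeas hindep f hfmeas hbd hdeg1 hdeg2 c a ha)
    _ = (GOOD.card : ℝ) := by rw [Finset.sum_boole]
    _ ≤ (Nat.factorial (2 * m) : ℝ) *
        ∑ k ∈ Finset.Nat.antidiagonalTuple n (2 * m),
          ∏ j, (if k j = 1 then 0 else 1 / (Nat.factorial (k j) : ℝ)) := by
        have hsplit : GOOD.card = ∑ k ∈ Finset.Nat.antidiagonalTuple n (2 * m),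
            (GOOD.filter fun c => (fun j => slotCount c j) = k).card :=
          Finset.card_eq_sum_card_fiberwise fun c _ =>
            Finset.Nat.mem_antidiagonalTuple.mpr (hsum c)
        rw [hsplit, Finset.mul_sum, Nat.cast_sum]
        refine Finset.sum_le_sum fun k hk => ?_
        by_cases hk1 : ∃ j, k j = 1
        · -- the fiber is empty and the right-hand side is nonnegative
          obtain ⟨j₀, hj₀⟩ := hk1
          have hempty : (GOOD.filter fun c => (fun j => slotCount c j) = k) = ∅ := by
            refine Finset.eq_empty_of_forall_notMem fun c hc => ?_
            obtain ⟨hcg, hck⟩ := mem_filter.mp hc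
            have hgood := (mem_filter.mp hcg).2
            exact hgood j₀ ((congrFun hck j₀).trans hj₀)
          rw [hempty]
          simp only [card_empty, Nat.cast_zero]
          refine mul_nonneg (Nat.cast_nonneg _) (Finset.prod_nonneg fun j _ => ?_)
          split_ifs
          · exact le_rfl
          · positivity
        · push_neg at hk1
          have hprod : ∏ j, (if k j = 1 then 0 else 1 / (Nat.factorial (k j) : ℝ))
              = ∏ j, 1 / (Nat.factorial (k j) : ℝ) :=
            Finset.prod_congr rfl fun j _ => if_neg (hk1 j)
          rw [hprod]
          have hcount := count_bound (α := Fin m × Bool) (ι := Fin n) k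
          rw [Fintype.card_prod, Fintype.card_fin, Fintype.card_bool, mul_comm m 2] at hcount
          have hPpos : (0:ℝ) < ∏ j, ((k j).factorial : ℝ) :=
            Finset.prod_pos fun j _ => by positivity
          have hreal : ((GOOD.filter fun c => (fun j => slotCount c j) = k).card : ℝ)
              * ∏ j, ((k j).factorial : ℝ) ≤ (Nat.factorial (2 * m) : ℝ) := by
            have hnat : (GOOD.filter fun c => (fun j => slotCount c j) = k).card
                * ∏ j, (k j).factorial ≤ Nat.factorial (2 * m) := by
              refine le_trans (Nat.mul_le_mul_right _ ?_) hcount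
              refine Finset.card_le_card_of_injOn
                (fun c => fun s : Fin m × Bool => cond s.2 (c s.1).2 (c s.1).1) ?_ ?_
              · intro c hc
                obtain ⟨-, hck⟩ := mem_filter.mp hc
                exact mem_filter.mpr ⟨mem_univ _, fun j => congrFun hck j⟩
              · intro c _ c' _ h
                funext t
                have h1 := congrFun h (t, false)
                have h2 := congrFun h (t, true)
                exact Prod.ext_iff.mpr ⟨h1, h2⟩
            exact_mod_cast hnat
          calc ((GOOD.filter fun c => (fun j => slotCount c j) = k).card : ℝ)
              ≤ (Nat.factorial (2 * m) : ℝ) / ∏ j, ((k j).factorial : ℝ) :=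
                (le_div_iff₀ hPpos).mpr hreal
            _ = (Nat.factorial (2 * m) : ℝ) * ∏ j, 1 / ((k j).factorial : ℝ) := by
                rw [div_eq_mul_inv, ← Finset.prod_inv_distrib]
                simp [one_div]
end
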